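/- arXiv:1101.2765 — 6 statements merged into one kernel-verified Lean document; each statement's English description precedes it below -/
import Mathlib

section
/- Let G be a bridgeless connected graph of diameter 2. Then either G is 2-connected, or G has exactly one cut vertex v; moreover, in the latter case v is adjacent to every other vertex of G (so v is a center of G and G has radius 1). -/
open SimpleGraph

/-- `G` is rainbow connected with `n` colors: there exists an `n`-edge-coloring such that
any two distinct vertices are joined by a path whose edges receive pairwise distinct colors. -/
def SimpleGraph.RainbowConnected {V : Type*} (G : SimpleGraph V) (n : ℕ) : Prop :=
  ∃ c : Sym2 V → Fin n, ∀ u v : V, u ≠ v →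
    ∃ p : G.Walk u v, p.IsPath ∧ (p.edges.map c).Nodup

/-- The rainbow connection number of `G`: the least `n` for which `G` is rainbow
connected with `n` colors. -/
noncomputable def SimpleGraph.rc {V : Type*} (G : SimpleGraph V) : ℕ :=
  sInf {n | G.RainbowConnected n}

/-- A vertex `v` of a connected graph `G` is a cut vertex if deleting it
disconnects the graph. -/
def SimpleGraph.IsCutVertex {V : Type*} (G : SimpleGraph V) (v : V) : Prop :=
  G.Connected ∧ ¬(G.induce ({v}ᶜ : Set V)).Connected

/-- A graph on at least `3` vertices is `2`-connected if it is connected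
and has no cut vertex. -/
def SimpleGraph.TwoConnected {V : Type*} [Fintype V] (G : SimpleGraph V) : Prop :=
  3 ≤ Fintype.card V ∧ G.Connected ∧ ∀ v : V, ¬G.IsCutVertex v

/-!
If `v` is a cut vertex, two vertices `a`, `b` in different components of `G - v` are at
distance at most `2` in `G`, so every shortest `a`–`b` walk is `a v b`. Every vertex other
than `v` lies in some component of `G - v` and is paired with a vertex of another one,
hence is adjacent to `v`. A vertex adjacent to all others keeps `G - w` connected for every
`w ≠ v`, so `v` is the only cut vertex.
-/

namespace SimpleGraph

variable {V : Type*} {G : SimpleGraph V}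

lemma adj_of_not_reachable_induce_compl_singleton {a b v : V} (hab : G.edist a b ≤ 2)
    (ha : a ≠ v) (hb : b ≠ v)
    (hnr : ¬(G.induce ({v}ᶜ : Set V)).Reachable ⟨a, ha⟩ ⟨b, hb⟩) :
    G.Adj a v ∧ G.Adj v b := by
  obtain ⟨p, hp⟩ := exists_walk_of_edist_ne_top (hab.trans_lt (by decide)).ne
  have hlen : p.length ≤ 2 := by exact_mod_cast hp ▸ hab
  match p, hlen with
  | .nil, _ => exact absurd .rfl hnr
  | .cons hax .nil, _ => exact absurd (induce_adj.2 hax).reachable hnr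
  | .cons (v := x) hax (.cons hxb .nil), _ =>
    by_cases hx : x = v
    · subst hx
      exact ⟨hax, hxb⟩
    · have hax' : (G.induce ({v}ᶜ : Set V)).Adj ⟨a, ha⟩ ⟨x, hx⟩ := induce_adj.2 hax
      have hxb' : (G.induce ({v}ᶜ : Set V)).Adj ⟨x, hx⟩ ⟨b, hb⟩ := induce_adj.2 hxb
      exact absurd (hax'.reachable.trans hxb'.reachable) hnr

lemma IsCutVertex.adj_of_ediam_le_two (hdiam : G.ediam ≤ 2) {v w : V} (hv : G.IsCutVertex v)
    (hw : w ≠ v) : G.Adj v w := by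
  have : Nonempty ({v}ᶜ : Set V) := ⟨⟨w, hw⟩⟩
  obtain ⟨a, b, hab⟩ : ∃ a b, ¬(G.induce ({v}ᶜ : Set V)).Reachable a b := by
    by_contra! h
    exact hv.2 ⟨h⟩
  by_cases haw : (G.induce ({v}ᶜ : Set V)).Reachable a ⟨w, hw⟩
  · have hwb : ¬(G.induce ({v}ᶜ : Set V)).Reachable ⟨w, hw⟩ b := fun h => hab (haw.trans h)
    exact (adj_of_not_reachable_induce_compl_singleton (edist_le_ediam.trans hdiam)
      hw b.2 hwb).1.symm
  · exact (adj_of_not_reachable_induce_compl_singleton (edist_le_ediam.trans hdiam)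
      a.2 hw haw).2

lemma not_isCutVertex_of_forall_adj {v w : V} (hv : ∀ u, u ≠ v → G.Adj v u) (hwv : w ≠ v) :
    ¬G.IsCutVertex w := by
  rintro ⟨-, hdisc⟩
  apply hdisc
  let v' : ({w}ᶜ : Set V) := ⟨v, hwv.symm⟩
  have : Nonempty ({w}ᶜ : Set V) := ⟨v'⟩
  have hreach : ∀ x, (G.induce ({w}ᶜ : Set V)).Reachable x v' := by
    intro x
    by_cases hx : (x : V) = v
    · exact (Subtype.ext hx : x = v') ▸ .rfl
    · exact (induce_adj.2 (hv x hx).symm).reachable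
  exact ⟨fun x y => (hreach x).trans (hreach y).symm⟩

lemma diam_lt_card [Fintype V] [Nonempty V] : G.diam < Fintype.card V := by
  obtain ⟨u, w, huw⟩ := G.exists_dist_eq_diam
  by_cases hr : G.Reachable u w
  · obtain ⟨p, hpath, hlen⟩ := hr.exists_path_of_dist
    exact huw ▸ hlen ▸ hpath.length_lt
  · rw [← huw, dist_eq_zero_of_not_reachable hr]
    exact Fintype.card_pos

end SimpleGraph

theorem twoConnected_or_unique_cutVertex_general {V : Type*} [Fintype V] (G : SimpleGraph V)
    (hconn : G.Connected)
    (hdiam : G.diam = 2) :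
    G.TwoConnected ∨
      ∃ v : V, (∀ w : V, G.IsCutVertex w ↔ w = v) ∧ ∀ w : V, w ≠ v → G.Adj v w := by
  by_cases hcut : ∃ v, G.IsCutVertex v
  · obtain ⟨v, hv⟩ := hcut
    have hediam : G.ediam ≤ 2 := by
      rw [← ENat.natCast_toNat (ediam_ne_top_of_diam_ne_zero (by omega))]
      exact_mod_cast hdiam.le
    have hadj : ∀ w, w ≠ v → G.Adj v w := fun w => hv.adj_of_ediam_le_two hediam
    refine .inr ⟨v, fun w => ⟨fun hw => ?_, fun h => h ▸ hv⟩, hadj⟩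
    by_contra hwv
    exact not_isCutVertex_of_forall_adj hadj hwv hw
  · push Not at hcut
    have : Nonempty V := hconn.nonempty
    have hcard : G.diam < Fintype.card V := G.diam_lt_card
    exact .inl ⟨by omega, hconn, hcut⟩

/-- A bridgeless connected graph of diameter `2` is either `2`-connected, or has a
unique cut vertex `v`, which is adjacent to every other vertex (so `v` is a center of
`G` and `G` has radius `1`). -/
theorem twoConnected_or_unique_cutVertex {V : Type*} [Fintype V] (G : SimpleGraph V)
    (hconn : G.Connected) (hbridgeless : ∀ e : Sym2 V, ¬G.IsBridge e)
    (hdiam : G.diam = 2) :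
    G.TwoConnected ∨
      ∃ v : V, (∀ w : V, G.IsCutVertex w ↔ w = v) ∧ ∀ w : V, w ≠ v → G.Adj v w :=
  twoConnected_or_unique_cutVertex_general G hconn hdiam
end

section
/- Let G be a bridgeless connected graph of diameter 2 that has a cut vertex. Then the rainbow connection number of G satisfies rc(G) ≤ 3. -/
open SimpleGraph

/-!
Let `x` be a cut vertex. Two vertices in different components of `G - x` can be at distance
two only through `x`, so `x` is adjacent to every other vertex; and since no edge `ux` is a
bridge, every `u ≠ x` also has a neighbour other than `x`. A maximum cut `g` of `G - x` gives
every such `u` a neighbour on the other side (otherwise moving `u` would enlarge the cut).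
Colour each edge `ux` by `g u ∈ {0, 1}` and every other edge by `2`. Non-adjacent `a`, `b` are
then joined by the rainbow path `a x b` if `g a ≠ g b`, and otherwise by `a a' x b`, where `a'`
is a neighbour of `a` on the other side.
-/

namespace SimpleGraph

variable {V : Type*} {G : SimpleGraph V} {u x : V}

lemma exists_adj_ne_of_not_isBridge (hux : u ≠ x) (hb : ¬G.IsBridge s(u, x)) :
    ∃ w, G.Adj u w ∧ w ≠ x := by
  rw [isBridge_iff, not_not] at hb
  obtain ⟨p⟩ := hb
  have hsnd := p.adj_snd (p.not_nil_of_ne hux)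
  rw [deleteEdges_adj] at hsnd
  exact ⟨p.snd, hsnd.1, fun hwx ↦ hsnd.2 (by rw [hwx, Set.mem_singleton_iff])⟩

lemma adj_or_reachable_induce_compl_of_edist_le_two {t : V} (hu : u ≠ x) (ht : t ≠ x)
    (hut : G.edist u t ≤ 2) :
    G.Adj u x ∨ (G.induce ({x}ᶜ : Set V)).Reachable ⟨u, hu⟩ ⟨t, ht⟩ := by
  by_cases heq : u = t
  · subst heq; exact .inr .rfl
  by_cases hadj : G.Adj u t
  · exact .inr (Adj.reachable (by simpa using hadj))
  obtain ⟨m, hm⟩ : (G.commonNeighbors u t).Nonempty := by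
    by_contra hempty
    rw [Set.not_nonempty_iff_eq_empty] at hempty
    exact not_lt.mpr hut (two_lt_edist_iff.mpr ⟨heq, hadj, hempty⟩)
  rw [mem_commonNeighbors] at hm
  by_cases hmx : m = x
  · exact .inl (hmx ▸ hm.1)
  have hum : (G.induce ({x}ᶜ : Set V)).Adj ⟨u, hu⟩ ⟨m, hmx⟩ := by simpa using hm.1
  have hmt : (G.induce ({x}ᶜ : Set V)).Adj ⟨m, hmx⟩ ⟨t, ht⟩ := by simpa using hm.2.symm
  exact .inr (hum.reachable.trans hmt.reachable)

lemma IsCutVertex.adj_of_ediam_le_two_s3 (hx : G.IsCutVertex x) (hdiam : G.ediam ≤ 2)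
    (hu : u ≠ x) : G.Adj u x := by
  have hdisc := hx.2
  rw [connected_iff, not_and_or, Preconnected] at hdisc
  simp only [not_forall, not_nonempty_iff] at hdisc
  obtain ⟨a, b, hab⟩ | hempty := hdisc
  · by_contra hux
    have hreach (t : ({x}ᶜ : Set V)) : (G.induce ({x}ᶜ : Set V)).Reachable ⟨u, hu⟩ t :=
      (adj_or_reachable_induce_compl_of_edist_le_two hu t.2
        (edist_le_ediam.trans hdiam)).resolve_left hux
    exact hab ((hreach a).symm.trans (hreach b))
  · exact (hempty.false ⟨u, hu⟩).elim

section Cut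

variable [Fintype V]

open Classical Finset in
noncomputable def cutSize (H : SimpleGraph V) (g : V → Bool) : ℕ :=
  #{p : V × V | H.Adj p.1 p.2 ∧ g p.1 ≠ g p.2}

variable {H : SimpleGraph V}

lemma cutSize_lt_update_not [DecidableEq V] {g : V → Bool} {w : V} (huw : H.Adj u w)
    (hsame : ∀ v, H.Adj u v → g v = g u) :
    H.cutSize g < H.cutSize (Function.update g u (!g u)) := by
  unfold cutSize
  refine Finset.card_lt_card (Finset.ssubset_iff_of_subset ?_ |>.mpr ⟨(u, w), ?_, ?_⟩)
  · intro ⟨a, b⟩ hp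
    simp only [Finset.mem_filter, Finset.mem_univ, true_and] at hp ⊢
    have ha : a ≠ u := by rintro rfl; exact hp.2 (hsame b hp.1).symm
    have hb : b ≠ u := by rintro rfl; exact hp.2 (hsame a hp.1.symm)
    simpa [Function.update_of_ne ha, Function.update_of_ne hb] using hp
  · simp [huw, Function.update_of_ne huw.ne', hsame w huw]
  · simp [hsame w huw]

theorem exists_bool_forall_exists_adj_ne (H : SimpleGraph V) :
    ∃ g : V → Bool, ∀ u w, H.Adj u w → ∃ v, H.Adj u v ∧ g v ≠ g u := by
  classical
  obtain ⟨g, -, hmax⟩ := Finset.univ.exists_max_image H.cutSize Finset.univ_nonempty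
  refine ⟨g, fun u w huw ↦ ?_⟩
  by_contra! hsame
  exact (cutSize_lt_update_not huw hsame).not_ge (hmax _ (Finset.mem_univ _))

end Cut

section StarColoring

variable [DecidableEq V] (g : V → Bool) {w : V}

def starColoring (x : V) (g : V → Bool) : Sym2 V → Fin 3 :=
  Sym2.lift ⟨fun a b ↦ if a = x then (bif g b then 0 else 1)
    else if b = x then (bif g a then 0 else 1) else 2, by
      intro a b; by_cases ha : a = x <;> by_cases hb : b = x <;> simp [ha, hb]⟩

lemma starColoring_mk_center (hu : u ≠ x) :
    starColoring x g s(u, x) = bif g u then 0 else 1 := by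
  simp [starColoring, hu]

lemma starColoring_center_mk (hu : u ≠ x) :
    starColoring x g s(x, u) = bif g u then 0 else 1 := by
  rw [Sym2.eq_swap, starColoring_mk_center g hu]

lemma starColoring_mk_of_ne (hu : u ≠ x) (hw : w ≠ x) : starColoring x g s(u, w) = 2 := by
  simp [starColoring, hu, hw]

end StarColoring

lemma rainbowConnected_three_of_forall_adj (g : V → Bool)
    (hx : ∀ u, u ≠ x → G.Adj u x)
    (hg : ∀ u, u ≠ x → ∃ w, G.Adj u w ∧ w ≠ x ∧ g w ≠ g u) :
    G.RainbowConnected 3 := by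
  classical
  refine ⟨starColoring x g, fun a b hab ↦ ?_⟩
  by_cases hadj : G.Adj a b
  · exact ⟨hadj.toWalk, by simp [hab], by simp⟩
  have ha : a ≠ x := by rintro rfl; exact hadj (hx b hab.symm).symm
  have hb : b ≠ x := by rintro rfl; exact hadj (hx a hab)
  by_cases hgab : g a = g b
  · obtain ⟨a', haa', ha'x, hga'⟩ := hg a ha
    have ha'b : a' ≠ b := by rintro rfl; exact hadj haa'
    refine ⟨.cons haa' (.cons (hx a' ha'x) (.cons (hx b hb).symm .nil)), ?_, ?_⟩
    · simp [haa'.ne, ha, hab, ha'x, ha'b, hb.symm]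
    · simp only [Walk.edges_cons, Walk.edges_nil, List.map_cons, List.map_nil,
        starColoring_mk_of_ne g ha ha'x, starColoring_mk_center g ha'x,
        starColoring_center_mk g hb]
      rw [show g a' = !g b from Bool.eq_not_iff.mpr (hgab ▸ hga')]
      cases g b <;> decide
  · refine ⟨.cons (hx a ha) (.cons (hx b hb).symm .nil), ?_, ?_⟩
    · simp [ha, hab, hb.symm]
    · simp only [Walk.edges_cons, Walk.edges_nil, List.map_cons, List.map_nil,
        starColoring_mk_center g ha, starColoring_center_mk g hb]
      rw [show g a = !g b from Bool.eq_not_iff.mpr hgab]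
      cases g b <;> decide

end SimpleGraph

theorem rc_le_three_of_bridgeless_diam_two_cutVertex_general {V : Type*} [Fintype V]
    (G : SimpleGraph V)
    (hbridgeless : ∀ e : Sym2 V, ¬G.IsBridge e) (hdiam : G.diam = 2)
    (hcut : ∃ v : V, G.IsCutVertex v) :
    G.rc ≤ 3 := by
  obtain ⟨x, hx⟩ := hcut
  have hediam : G.ediam ≤ 2 := by
    rw [← ENat.natCast_toNat (ediam_ne_top_of_diam_ne_zero (by omega))]
    exact_mod_cast hdiam.le
  have hxadj (u) (hu : u ≠ x) : G.Adj u x := hx.adj_of_ediam_le_two_s3 hediam hu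
  obtain ⟨g, hg⟩ := (G.deleteIncidenceSet x).exists_bool_forall_exists_adj_ne
  refine Nat.sInf_le (rainbowConnected_three_of_forall_adj g hxadj fun u hu ↦ ?_)
  obtain ⟨w, huw, hwx⟩ := exists_adj_ne_of_not_isBridge hu (hbridgeless s(u, x))
  obtain ⟨v, huv, hgv⟩ := hg u w (deleteIncidenceSet_adj.mpr ⟨huw, hu, hwx⟩)
  obtain ⟨huv, -, hvx⟩ := deleteIncidenceSet_adj.mp huv
  exact ⟨v, huv, hvx, hgv⟩

/-- A bridgeless connected graph of diameter `2` with a cut vertex has rainbow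
connection number at most `3`. -/
theorem rc_le_three_of_bridgeless_diam_two_cutVertex {V : Type*} [Fintype V]
    (G : SimpleGraph V) (hconn : G.Connected)
    (hbridgeless : ∀ e : Sym2 V, ¬G.IsBridge e) (hdiam : G.diam = 2)
    (hcut : ∃ v : V, G.IsCutVertex v) :
    G.rc ≤ 3 :=
  rc_le_three_of_bridgeless_diam_two_cutVertex_general G hbridgeless hdiam hcut
end

section
/- Let G be a strongly regular graph with parameters (n, k, λ, μ) satisfying μ ≥ 1, and suppose G is not a star. Then the rainbow connection number of G satisfies rc(G) ≤ 5. -/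
open SimpleGraph

/-!
Fix a hub `x` and call a vertex *far* if it is neither `x` nor a neighbour of `x`. Given a bit
`α a` for each neighbour `a` of `x`, colour the edge `x a` by `0` or `1` and each edge from `a`
to a far vertex by `2` or `3` according to `α a`, and every other edge by `4`. A neighbour `a`
of `x` is an *attachment* of a far vertex `b` if `b` is reached as `x - a - b` or `x - a - w - b`
with `w` far; that walk is rainbow and uses only the two colours of `α a` and possibly `4`. If
every far vertex has attachments with both bits, rainbow walks between any two vertices are
glued from such walks (two neighbours of `x` with the same bit are joined through a far
neighbour of one of them), and a rainbow walk shortens to a rainbow path.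

In a strongly regular graph with `μ ≥ 1` which is not complete, `ℓ + 2 ≤ k`. If `ℓ = 0`, every
neighbour of `x` is an attachment of every far vertex. Otherwise let `α` be the indicator of a
maximal independent subset `M` of `N(x)`. Counting common neighbours shows that the
non-attachments of a far `b` form a clique `K` adjacent to all of `N(x) ∩ N(b)`, of size at
most `ℓ`. Attachments avoiding `M` force `M` to be a single vertex adjacent to the rest of
`N(x)`; attachments inside `M` are independent, so each has exactly `K` as its neighbourhood
in `N(x)`, and any vertex of `K` is adjacent to the rest of `N(x)`. Both contradict
`ℓ + 2 ≤ k`.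
-/

namespace SimpleGraph

variable {V : Type*} {G : SimpleGraph V}

def Walk.IsRainbow {C : Type*} (c : Sym2 V → C) {u v : V} (p : G.Walk u v) : Prop :=
  (p.edges.map c).Nodup

theorem Walk.IsRainbow.reverse {C : Type*} {c : Sym2 V → C} {u v : V} {p : G.Walk u v}
    (hp : p.IsRainbow c) : p.reverse.IsRainbow c := by
  rwa [Walk.IsRainbow, Walk.edges_reverse, List.map_reverse, List.nodup_reverse]

theorem rainbowConnected_of_forall_exists_isRainbow [DecidableEq V] {n : ℕ} (c : Sym2 V → Fin n)
    (h : ∀ u v, ∃ p : G.Walk u v, p.IsRainbow c) : G.RainbowConnected n :=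
  ⟨c, fun u v _ =>
    let ⟨p, hp⟩ := h u v
    ⟨p.bypass, p.bypass_isPath, hp.sublist (p.edges_bypass_sublist_edges.map c)⟩⟩

def IsAttachment (G : SimpleGraph V) (x b a : V) : Prop :=
  G.Adj x a ∧ (G.Adj a b ∨ ∃ w, ¬G.Adj x w ∧ G.Adj a w ∧ G.Adj w b)

def AttachmentsBicolored (G : SimpleGraph V) (x : V) (α : V → Bool) : Prop :=
  ∀ b, b ≠ x → ¬G.Adj x b → ∀ t, ∃ a, G.IsAttachment x b a ∧ α a = t

section HubColoring

def spokeColor (t : Bool) : Fin 5 := if t then 0 else 1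

def crossColor (t : Bool) : Fin 5 := if t then 2 else 3

variable [DecidableEq V] [DecidableRel G.Adj] {x u v a b : V} {α : V → Bool}

variable (G) in
def hubColoring (x : V) (α : V → Bool) : Sym2 V → Fin 5 :=
  Sym2.lift ⟨fun u v =>
    if G.Adj x u ∧ ¬G.Adj x v then (if v = x then spokeColor else crossColor) (α u)
    else if G.Adj x v ∧ ¬G.Adj x u then (if u = x then spokeColor else crossColor) (α v)
    else 4, fun u v => by by_cases G.Adj x u <;> by_cases G.Adj x v <;> simp [*]⟩

theorem hubColoring_hub_adj (ha : G.Adj x a) : hubColoring G x α s(x, a) = spokeColor (α a) := by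
  simp [hubColoring, ha]

theorem hubColoring_adj_hub (ha : G.Adj x a) : hubColoring G x α s(a, x) = spokeColor (α a) := by
  simp [hubColoring, ha]

theorem hubColoring_adj_far (ha : G.Adj x a) (hbx : b ≠ x) (hb : ¬G.Adj x b) :
    hubColoring G x α s(a, b) = crossColor (α a) := by
  simp [hubColoring, ha, hb, hbx]

theorem hubColoring_far_adj (ha : G.Adj x a) (hbx : b ≠ x) (hb : ¬G.Adj x b) :
    hubColoring G x α s(b, a) = crossColor (α a) := by
  simp [hubColoring, ha, hb, hbx]

theorem hubColoring_far_far (hu : ¬G.Adj x u) (hv : ¬G.Adj x v) :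
    hubColoring G x α s(u, v) = 4 := by
  simp [hubColoring, hu, hv]

open List in
theorem AttachmentsBicolored.exists_walk_hubColoring_sublist (hα : G.AttachmentsBicolored x α)
    (hbx : b ≠ x) (hb : ¬G.Adj x b) (t : Bool) :
    ∃ p : G.Walk x b, p.edges.map (hubColoring G x α) <+ [spokeColor t, crossColor t, 4] := by
  obtain ⟨a, ⟨hxa, hab | ⟨w, hxw, haw, hwb⟩⟩, rfl⟩ := hα b hbx hb t
  · refine ⟨.cons hxa (.cons hab .nil), ?_⟩
    simp [hubColoring_hub_adj hxa, hubColoring_adj_far hxa hbx hb]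
  · have hwx : w ≠ x := by rintro rfl; exact hb hwb
    refine ⟨.cons hxa (.cons haw (.cons hwb .nil)), ?_⟩
    simp [hubColoring_hub_adj hxa, hubColoring_adj_far hxa hwx hxw, hubColoring_far_far hxw hb]

theorem AttachmentsBicolored.exists_isRainbow_hub (hα : G.AttachmentsBicolored x α) (v : V) :
    ∃ p : G.Walk x v, p.IsRainbow (hubColoring G x α) := by
  rcases eq_or_ne v x with rfl | hvx
  · exact ⟨.nil, List.nodup_nil⟩
  by_cases hv : G.Adj x v
  · exact ⟨.cons hv .nil, List.nodup_singleton _⟩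
  obtain ⟨p, hp⟩ := hα.exists_walk_hubColoring_sublist hvx hv true
  exact ⟨p, List.Nodup.sublist hp (by decide)⟩

theorem AttachmentsBicolored.exists_isRainbow_adj_adj (hα : G.AttachmentsBicolored x α)
    (hA : ∀ a, G.Adj x a → ∃ b, G.Adj a b ∧ b ≠ x ∧ ¬G.Adj x b) (hu : G.Adj x u)
    (hv : G.Adj x v) : ∃ p : G.Walk u v, p.IsRainbow (hubColoring G x α) := by
  by_cases huv : α u = α v
  · obtain ⟨b, hvb, hbx, hb⟩ := hA v hv
    obtain ⟨q, hq⟩ := hα.exists_walk_hubColoring_sublist hbx hb (!α v)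
    refine ⟨.cons hu.symm (q.append (.cons hvb.symm .nil)), List.Nodup.sublist ?_
      (l₂ := [spokeColor (α v), spokeColor (!α v), crossColor (!α v), 4, crossColor (α v)])
      (by cases α v <;> decide)⟩
    simp only [Walk.edges_cons, Walk.edges_append, Walk.edges_nil, List.map_cons,
      List.map_append, List.map_nil, hubColoring_adj_hub hu, hubColoring_far_adj hv hbx hb, huv]
    exact (hq.append_right _).cons_cons _
  · refine ⟨.cons hu.symm (.cons hv .nil), ?_⟩
    cases hαu : α u <;> cases hαv : α v <;>
      simp_all [Walk.IsRainbow, hubColoring_adj_hub hu, hubColoring_hub_adj hv, spokeColor]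

theorem AttachmentsBicolored.exists_isRainbow_adj_far (hα : G.AttachmentsBicolored x α)
    (hu : G.Adj x u) (hvx : v ≠ x) (hv : ¬G.Adj x v) :
    ∃ p : G.Walk u v, p.IsRainbow (hubColoring G x α) := by
  obtain ⟨q, hq⟩ := hα.exists_walk_hubColoring_sublist hvx hv (!α u)
  refine ⟨.cons hu.symm q, List.Nodup.sublist ?_
    (l₂ := [spokeColor (α u), spokeColor (!α u), crossColor (!α u), 4])
    (by cases α u <;> decide)⟩
  simp only [Walk.edges_cons, List.map_cons, hubColoring_adj_hub hu]
  exact hq.cons_cons _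

theorem AttachmentsBicolored.exists_isRainbow_far_far (hα : G.AttachmentsBicolored x α)
    (hB : ∀ b, b ≠ x → ¬G.Adj x b → (G.commonNeighbors x b).Nonempty) (hux : u ≠ x)
    (hu : ¬G.Adj x u) (hvx : v ≠ x) (hv : ¬G.Adj x v) :
    ∃ p : G.Walk u v, p.IsRainbow (hubColoring G x α) := by
  obtain ⟨a, hxa, hua⟩ : ∃ a, G.Adj x a ∧ G.Adj u a := hB u hux hu
  obtain ⟨q, hq⟩ := hα.exists_walk_hubColoring_sublist hvx hv (!α a)
  refine ⟨.cons hua (.cons hxa.symm q), List.Nodup.sublist ?_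
    (l₂ := [crossColor (α a), spokeColor (α a), spokeColor (!α a), crossColor (!α a), 4])
    (by cases α a <;> decide)⟩
  simp only [Walk.edges_cons, List.map_cons, hubColoring_far_adj hxa hux hu,
    hubColoring_adj_hub hxa]
  exact (hq.cons_cons _).cons_cons _

theorem AttachmentsBicolored.forall_exists_isRainbow (hα : G.AttachmentsBicolored x α)
    (hA : ∀ a, G.Adj x a → ∃ b, G.Adj a b ∧ b ≠ x ∧ ¬G.Adj x b)
    (hB : ∀ b, b ≠ x → ¬G.Adj x b → (G.commonNeighbors x b).Nonempty) (u v : V) :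
    ∃ p : G.Walk u v, p.IsRainbow (hubColoring G x α) := by
  have reverse {u v : V} : (∃ p : G.Walk v u, p.IsRainbow (hubColoring G x α)) →
      ∃ p : G.Walk u v, p.IsRainbow (hubColoring G x α) := fun ⟨p, hp⟩ => ⟨p.reverse, hp.reverse⟩
  rcases eq_or_ne u x with rfl | hux
  · exact hα.exists_isRainbow_hub v
  rcases eq_or_ne v x with rfl | hvx
  · exact reverse (hα.exists_isRainbow_hub u)
  by_cases hu : G.Adj x u <;> by_cases hv : G.Adj x v
  · exact hα.exists_isRainbow_adj_adj hA hu hv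
  · exact hα.exists_isRainbow_adj_far hu hvx hv
  · exact reverse (hα.exists_isRainbow_adj_far hv hux hu)
  · exact hα.exists_isRainbow_far_far hB hux hu hvx hv

end HubColoring

theorem mem_of_maximal_isIndepSet {S M : Set V} {a : V}
    (hM : Maximal (fun s => s ⊆ S ∧ G.IsIndepSet s) M) (ha : a ∈ S)
    (hadj : ∀ m ∈ M, ¬G.Adj a m) : a ∈ M :=
  hM.mem_of_prop_insert ⟨Set.insert_subset ha hM.prop.1, hM.prop.2.insert fun m hm _ =>
    ⟨hadj m hm, fun hma => hadj m hm hma.symm⟩⟩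

namespace IsSRGWith

variable [Fintype V] [DecidableRel G.Adj] {n k ℓ μ : ℕ} {u v x b a : V}

theorem ncard_neighborSet (h : G.IsSRGWith n k ℓ μ) (v : V) : (G.neighborSet v).ncard = k := by
  rw [← Nat.card_coe_set_eq, Nat.card_eq_fintype_card, card_neighborSet_eq_degree, h.regular v]

theorem ncard_commonNeighbors_of_adj (h : G.IsSRGWith n k ℓ μ) (huv : G.Adj u v) :
    (G.commonNeighbors u v).ncard = ℓ := by
  rw [← Nat.card_coe_set_eq, Nat.card_eq_fintype_card, h.of_adj u v huv]

theorem ncard_commonNeighbors_of_not_adj (h : G.IsSRGWith n k ℓ μ) (huv : u ≠ v)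
    (hadj : ¬G.Adj u v) : (G.commonNeighbors u v).ncard = μ := by
  rw [← Nat.card_coe_set_eq, Nat.card_eq_fintype_card, h.of_not_adj huv hadj]

theorem commonNeighbors_nonempty (h : G.IsSRGWith n k ℓ μ) (hμ : 1 ≤ μ) (huv : u ≠ v)
    (hadj : ¬G.Adj u v) : (G.commonNeighbors u v).Nonempty := by
  rw [← Set.ncard_pos, h.ncard_commonNeighbors_of_not_adj huv hadj]
  exact hμ

theorem add_two_le_of_not_adj (h : G.IsSRGWith n k ℓ μ) (hμ : 1 ≤ μ) (huv : u ≠ v)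
    (hadj : ¬G.Adj u v) : ℓ + 2 ≤ k := by
  obtain ⟨w, hwu, hwv⟩ := h.commonNeighbors_nonempty hμ huv hadj
  have hsub : insert u (insert v (G.commonNeighbors w u)) ⊆ G.neighborSet w := by
    rintro z (rfl | rfl | ⟨hwz, -⟩)
    exacts [hwu.symm, hwv.symm, hwz]
  have hv : v ∉ G.commonNeighbors w u := fun hv => hadj hv.2
  have hu : u ∉ insert v (G.commonNeighbors w u) := by
    rintro (rfl | hu)
    exacts [huv rfl, G.irrefl hu.2]
  have := Set.ncard_le_ncard hsub
  rw [Set.ncard_insert_of_notMem hu, Set.ncard_insert_of_notMem hv,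
    h.ncard_commonNeighbors_of_adj hwu.symm, h.ncard_neighborSet] at this
  omega

theorem exists_adj_ne_not_adj (h : G.IsSRGWith n k ℓ μ) (hk : ℓ + 2 ≤ k) (huv : G.Adj u v) :
    ∃ w, G.Adj u w ∧ w ≠ v ∧ ¬G.Adj v w := by
  by_contra! hcon
  have hsub : G.neighborSet u ⊆ insert v (G.commonNeighbors u v) := fun w huw =>
    (eq_or_ne w v).imp id fun hwv => ⟨huw, hcon w huw hwv⟩
  have := (Set.ncard_le_ncard hsub).trans (Set.ncard_insert_le _ _)
  rw [h.ncard_neighborSet, h.ncard_commonNeighbors_of_adj huv] at this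
  omega

theorem commonNeighbors_eq_of_subset (h : G.IsSRGWith n k ℓ μ) {u' : V} (hu : u ≠ v)
    (hadj : ¬G.Adj u v) (hu' : u' ≠ v) (hadj' : ¬G.Adj u' v)
    (hsub : G.commonNeighbors u v ⊆ G.commonNeighbors u' v) :
    G.commonNeighbors u v = G.commonNeighbors u' v :=
  Set.eq_of_subset_of_ncard_le hsub <| by
    rw [h.ncard_commonNeighbors_of_not_adj hu hadj, h.ncard_commonNeighbors_of_not_adj hu' hadj']

theorem adj_of_not_isAttachment (h : G.IsSRGWith n k ℓ μ) (hbx : b ≠ x) (hb : ¬G.Adj x b)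
    (ha : G.Adj x a) (hna : ¬G.IsAttachment x b a) {z : V} (hz : z ∈ G.commonNeighbors x b) :
    G.Adj a z := by
  have hab : ¬G.Adj a b := fun hab => hna ⟨ha, .inl hab⟩
  have hsub : G.commonNeighbors a b ⊆ G.commonNeighbors x b := fun w ⟨haw, hbw⟩ =>
    ⟨not_not.1 fun hxw => hna ⟨ha, .inr ⟨w, hxw, haw, hbw.symm⟩⟩, hbw⟩
  have hCN := h.commonNeighbors_eq_of_subset (by rintro rfl; exact hb ha) hab hbx.symm hb hsub
  exact (hCN ▸ hz).1

theorem isClique_nonattachments (h : G.IsSRGWith n k ℓ μ) (hbx : b ≠ x) (hb : ¬G.Adj x b) :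
    G.IsClique (G.neighborSet x \ {a | G.IsAttachment x b a}) := by
  rintro p ⟨hp, hpb⟩ q ⟨hq, hqb⟩ hpq
  by_contra hpq'
  have hsub : insert x (G.commonNeighbors x b) ⊆ G.commonNeighbors p q := by
    rintro z (rfl | hz)
    exacts [⟨hp.symm, hq.symm⟩,
      ⟨h.adj_of_not_isAttachment hbx hb hp hpb hz, h.adj_of_not_isAttachment hbx hb hq hqb hz⟩]
  have := Set.ncard_le_ncard hsub
  rw [Set.ncard_insert_of_notMem (G.notMem_commonNeighbors_left x b),
    h.ncard_commonNeighbors_of_not_adj hbx.symm hb, h.ncard_commonNeighbors_of_not_adj hpq hpq']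
    at this
  omega

theorem ncard_nonattachments_le (h : G.IsSRGWith n k ℓ μ) (hμ : 1 ≤ μ) (hbx : b ≠ x)
    (hb : ¬G.Adj x b) : (G.neighborSet x \ {a | G.IsAttachment x b a}).ncard ≤ ℓ := by
  set K := G.neighborSet x \ {a | G.IsAttachment x b a}
  rcases K.eq_empty_or_nonempty with hK | ⟨r, hr⟩
  · simp [hK]
  have hsub : K \ {r} ∪ G.commonNeighbors x b ⊆ G.commonNeighbors x r := by
    rintro z (⟨hzK, hzr⟩ | hz)
    · exact ⟨hzK.1, h.isClique_nonattachments hbx hb hr hzK (Ne.symm hzr)⟩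
    · exact ⟨hz.1, h.adj_of_not_isAttachment hbx hb hr.1 hr.2 hz⟩
  have hdisj : Disjoint (K \ {r}) (G.commonNeighbors x b) :=
    Set.disjoint_left.2 fun z hz hz' => hz.1.2 ⟨hz'.1, .inl hz'.2.symm⟩
  have := Set.ncard_le_ncard hsub
  rw [Set.ncard_union_eq hdisj, Set.ncard_sdiff_singleton_of_mem hr,
    h.ncard_commonNeighbors_of_not_adj hbx.symm hb, h.ncard_commonNeighbors_of_adj hr.1] at this
  have := (Set.ncard_pos).2 ⟨r, hr⟩
  omega

theorem not_isIndepSet_attachments (h : G.IsSRGWith n k ℓ μ) (hμ : 1 ≤ μ) (hk : ℓ + 2 ≤ k)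
    (hℓ : 1 ≤ ℓ) (hbx : b ≠ x) (hb : ¬G.Adj x b) : ¬G.IsIndepSet {a | G.IsAttachment x b a} := by
  intro hP
  set K := G.neighborSet x \ {a | G.IsAttachment x b a}
  have hCN (z : V) (hz : G.IsAttachment x b z) : G.commonNeighbors x z = K :=
    Set.eq_of_subset_of_ncard_le
      (fun y ⟨hxy, hzy⟩ => ⟨hxy, fun hy => hP hz hy (G.ne_of_adj hzy) hzy⟩)
      (by rw [h.ncard_commonNeighbors_of_adj hz.1]; exact h.ncard_nonattachments_le hμ hbx hb)
  obtain ⟨z, hxz, hbz⟩ := h.commonNeighbors_nonempty hμ hbx.symm hb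
  obtain ⟨r, hr⟩ : K.Nonempty := by
    rw [← hCN z ⟨hxz, .inl hbz.symm⟩, ← Set.ncard_pos, h.ncard_commonNeighbors_of_adj hxz]
    omega
  obtain ⟨a, hxa, har, hra⟩ := h.exists_adj_ne_not_adj hk hr.1
  by_cases ha : G.IsAttachment x b a
  · exact hra ((hCN a ha).symm ▸ hr).2.symm
  · exact hra (h.isClique_nonattachments hbx hb hr ⟨hxa, ha⟩ (Ne.symm har))

theorem exists_isAttachment_mem (h : G.IsSRGWith n k ℓ μ) (hk : ℓ + 2 ≤ k) (hbx : b ≠ x)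
    (hb : ¬G.Adj x b) {M : Set V}
    (hM : Maximal (fun s => s ⊆ G.neighborSet x ∧ G.IsIndepSet s) M) :
    ∃ a ∈ M, G.IsAttachment x b a := by
  by_contra! hMP
  have hM₁ : M.Subsingleton := fun p hp q hq => not_not.1 fun hpq =>
    hM.prop.2 hp hq hpq <| h.isClique_nonattachments hbx hb ⟨hM.prop.1 hp, hMP p hp⟩
      ⟨hM.prop.1 hq, hMP q hq⟩ hpq
  obtain ⟨a₀, ha₀⟩ : (G.neighborSet x).Nonempty := by
    rw [← Set.ncard_pos, h.ncard_neighborSet]; omega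
  rcases M.eq_empty_or_nonempty with rfl | ⟨m, hm⟩
  · simpa using mem_of_maximal_isIndepSet hM ha₀ (by simp)
  obtain ⟨a, hxa, ham, hma⟩ := h.exists_adj_ne_not_adj hk (hM.prop.1 hm)
  refine ham (hM₁ (mem_of_maximal_isIndepSet hM hxa fun m' hm' => ?_) hm)
  exact hM₁ hm' hm ▸ fun ham => hma ham.symm

theorem isAttachment_of_eq_zero (h : G.IsSRGWith n k ℓ μ) (hμ : 1 ≤ μ) (hℓ : ℓ = 0)
    (hb : ¬G.Adj x b) (ha : G.Adj x a) : G.IsAttachment x b a := by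
  refine ⟨ha, or_iff_not_imp_left.2 fun hab => ?_⟩
  obtain ⟨w, haw, hbw⟩ := h.commonNeighbors_nonempty hμ (by rintro rfl; exact hb ha) hab
  refine ⟨w, fun hxw => ?_, haw, hbw.symm⟩
  have := (Set.ncard_pos (s := G.commonNeighbors a w)).2 ⟨x, ha.symm, hxw.symm⟩
  rw [h.ncard_commonNeighbors_of_adj haw] at this
  omega

theorem exists_attachment_coloring (h : G.IsSRGWith n k ℓ μ) (hμ : 1 ≤ μ) (hk : ℓ + 2 ≤ k)
    (x : V) : ∃ α : V → Bool, G.AttachmentsBicolored x α := by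
  classical
  rcases Nat.eq_zero_or_pos ℓ with hℓ | hℓ
  · obtain ⟨a₀, ha₀⟩ : (G.neighborSet x).Nonempty := by
      rw [← Set.ncard_pos, h.ncard_neighborSet]; omega
    obtain ⟨a₁, ha₁, ha₁₀, -⟩ := h.exists_adj_ne_not_adj hk ha₀
    refine ⟨fun a => a = a₀, fun b _ hb t => ?_⟩
    cases t
    · exact ⟨a₁, h.isAttachment_of_eq_zero hμ hℓ hb ha₁, by simpa using ha₁₀⟩
    · exact ⟨a₀, h.isAttachment_of_eq_zero hμ hℓ hb ha₀, by simp⟩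
  · obtain ⟨M, hM⟩ := Set.Finite.exists_maximal (Set.toFinite
      {s | s ⊆ G.neighborSet x ∧ G.IsIndepSet s}) ⟨∅, Set.empty_subset _, Set.pairwise_empty _⟩
    refine ⟨fun a => a ∈ M, fun b hbx hb t => ?_⟩
    cases t
    · by_contra! hP
      refine h.not_isIndepSet_attachments hμ hk hℓ hbx hb (hM.prop.2.mono fun a ha => ?_)
      simpa using hP a ha
    · obtain ⟨a, haM, ha⟩ := h.exists_isAttachment_mem hk hbx hb hM
      exact ⟨a, ha, by simpa using haM⟩

end IsSRGWith

end SimpleGraph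

theorem rc_le_five_of_isSRGWith_general {V : Type*} [Fintype V] (G : SimpleGraph V)
    [DecidableRel G.Adj] (n k ℓ μ : ℕ) (hsrg : G.IsSRGWith n k ℓ μ)
    (hnc : G ≠ ⊤) (hμ : 1 ≤ μ) :
    G.rc ≤ 5 := by
  classical
  obtain ⟨x, y, hxy, hxy'⟩ := ne_top_iff_exists_not_adj.1 hnc
  have hk := hsrg.add_two_le_of_not_adj hμ hxy hxy'
  obtain ⟨α, hα⟩ := hsrg.exists_attachment_coloring hμ hk x
  refine Nat.sInf_le <| rainbowConnected_of_forall_exists_isRainbow _ <|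
    hα.forall_exists_isRainbow (fun a ha => hsrg.exists_adj_ne_not_adj hk ha.symm)
      (fun b hbx hb => hsrg.commonNeighbors_nonempty hμ hbx.symm hb)

/-- A strongly regular graph (neither empty nor complete) with `μ ≥ 1` which is not a
star has rainbow connection number at most `5`. -/
theorem rc_le_five_of_isSRGWith {V : Type*} [Fintype V] (G : SimpleGraph V)
    [DecidableRel G.Adj] (n k ℓ μ : ℕ) (hsrg : G.IsSRGWith n k ℓ μ)
    (hne : G ≠ ⊥) (hnc : G ≠ ⊤) (hμ : 1 ≤ μ)
    (hstar : ¬∃ t : ℕ, Nonempty (G ≃g completeBipartiteGraph (Fin 1) (Fin t))) :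
    G.rc ≤ 5 :=
  rc_le_five_of_isSRGWith_general G n k ℓ μ hsrg hnc hμ
end

section
/- For each integer n ≥ 4, the rainbow connection number of the cycle C_n on n vertices equals ⌈n/2⌉. -/
open SimpleGraph

/-!
Colouring the edge `{i, i + 1}` of `Cₙ` by `i mod ⌈n/2⌉` makes every arc of at most `⌊n/2⌋`
edges rainbow, and any two vertices are joined by such an arc.

Conversely, a walk making `a` forward and `b` backward steps from `u` to `u + ⌊n/2⌋` satisfies
`a - b ≡ ⌊n/2⌋ (mod n)`, so it has at least `⌊n/2⌋` edges; this settles even `n`. For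
`n = 2t + 1` and only `t` colours, the rainbow path from `u` to `u + t` has to be the forward arc,
so any `t` consecutive edges carry all `t` colours. Hence the colouring is `t`-periodic, and since
`2t ≡ -1 (mod n)` two adjacent edges share a colour, contradicting rainbowness of an arc.
-/

open Function
open scoped Fin.CommRing

lemma mod_ne_add_mod_mod {n k x δ : ℕ} (hk : n ≤ 2 * k) (hx : x < n) (hδ : 0 < δ)
    (hδn : δ < n - k) : x % k ≠ (x + δ) % n % k := by
  have mod_ne : ∀ {a b : ℕ}, a < b → b - a < 2 * k → b - a ≠ k → a % k ≠ b % k :=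
    fun hab h2k hne hmod =>
      hne (Nat.eq_of_dvd_of_lt_two_mul (by omega) ((Nat.modEq_iff_dvd' hab.le).1 hmod) h2k)
  rcases Nat.lt_or_ge (x + δ) n with hlt | hge
  · rw [Nat.mod_eq_of_lt hlt]
    exact mod_ne (b := x + δ) (by omega) (by omega) (by omega)
  · have hwrap : (x + δ) % n = x + δ - n := by
      rw [Nat.mod_eq_sub_mod hge, Nat.mod_eq_of_lt (by omega)]
    rw [hwrap]
    exact (mod_ne (a := x + δ - n) (b := x) (by omega) (by omega) (by omega)).symm

namespace SimpleGraph.cycleGraph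

variable {n : ℕ} [NeZero n]

lemma eq_of_add_natCast_eq {u : Fin n} {a b : ℕ} (ha : a < n) (hb : b < n)
    (h : u + (a : Fin n) = u + b) : a = b := by
  have := congrArg Fin.val (add_left_cancel h)
  rwa [Fin.val_natCast, Fin.val_natCast, Nat.mod_eq_of_lt ha, Nat.mod_eq_of_lt hb] at this

lemma adj_iff (hn : 2 ≤ n) {u v : Fin n} :
    (cycleGraph n).Adj u v ↔ v = u + 1 ∨ u = v + 1 := by
  obtain ⟨m, rfl⟩ : ∃ m, n = m + 2 := ⟨n - 2, by omega⟩
  rw [cycleGraph_adj, sub_eq_iff_eq_add, sub_eq_iff_eq_add, add_comm u, add_comm v, or_comm]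

def edge (i : Fin n) : Sym2 (Fin n) := s(i, i + 1)

lemma edge_injective (hn : 3 ≤ n) : Injective (edge (n := n)) := by
  intro i j h
  rcases Sym2.eq_iff.mp h with ⟨rfl, -⟩ | ⟨rfl, hj⟩
  · rfl
  · have h2 : ((2 : ℕ) : Fin n) = ((0 : ℕ) : Fin n) := by
      rw [← add_right_inj j]; push_cast; linear_combination hj
    have := eq_of_add_natCast_eq (u := (0 : Fin n)) (a := 2) (b := 0) (by omega) (by omega)
      (by rw [h2])
    omega

def arcEdges (u : Fin n) (L : ℕ) : List (Sym2 (Fin n)) :=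
  List.ofFn fun i : Fin L => edge (u + (i : ℕ))

lemma arcEdges_succ (u : Fin n) (L : ℕ) :
    arcEdges u (L + 1) = edge u :: arcEdges (u + 1) L := by
  simp only [arcEdges, List.ofFn_succ, Fin.val_zero, Nat.cast_zero, add_zero, Fin.val_succ,
    Nat.cast_succ, add_assoc, add_comm (1 : Fin n)]

def arc (hn : 2 ≤ n) : (L : ℕ) → (u : Fin n) → (cycleGraph n).Walk u (u + L)
  | 0, u => Walk.nil.copy rfl (by simp)
  | L + 1, u => (Walk.cons ((adj_iff hn).2 (.inl rfl)) (arc hn L (u + 1))).copy rfl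
      (by push_cast; ring)

lemma edges_arc (hn : 2 ≤ n) (L : ℕ) (u : Fin n) : (arc hn L u).edges = arcEdges u L := by
  induction L generalizing u with
  | zero => simp [arc, arcEdges]
  | succ L ih => rw [arc, Walk.edges_copy, Walk.edges_cons, ih, arcEdges_succ, edge]

lemma support_arc (hn : 2 ≤ n) (L : ℕ) (u : Fin n) :
    (arc hn L u).support = List.ofFn fun i : Fin (L + 1) => u + (i : ℕ) := by
  induction L generalizing u with
  | zero => simp [arc]
  | succ L ih =>
    rw [arc, Walk.support_copy, Walk.support_cons, ih, List.ofFn_succ (n := L + 1)]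
    simp only [Fin.val_zero, Nat.cast_zero, add_zero, Fin.val_succ, Nat.cast_succ, add_assoc,
      add_comm (1 : Fin n)]

lemma isPath_arc (hn : 2 ≤ n) {L : ℕ} (hL : L < n) (u : Fin n) : (arc hn L u).IsPath := by
  rw [Walk.isPath_def, support_arc, List.nodup_ofFn]
  exact fun i j h => Fin.ext (eq_of_add_natCast_eq (by omega) (by omega) h)

/-- `a` counts the forward steps `w → w + 1` of the walk and `b` its backward steps. -/
lemma exists_steps_of_walk (hn : 2 ≤ n) {u v : Fin n} (p : (cycleGraph n).Walk u v) :
    ∃ a b : ℕ, a + b = p.length ∧ u + a = v + b ∧ (b = 0 → p.edges = arcEdges u a) := by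
  induction p with
  | nil => exact ⟨0, 0, rfl, rfl, fun _ => rfl⟩
  | @cons u w v h q ih =>
    obtain ⟨a, b, hlen, hend, hedges⟩ := ih
    rcases (adj_iff hn).1 h with rfl | rfl
    · refine ⟨a + 1, b, by rw [Walk.length_cons]; omega, by push_cast; linear_combination hend,
        fun hb => ?_⟩
      rw [Walk.edges_cons, hedges hb, arcEdges_succ, edge]
    · exact ⟨a, b + 1, by rw [Walk.length_cons]; omega, by push_cast; linear_combination hend,
        by omega⟩

lemma exists_length_eq_of_walk_add (hn : 2 ≤ n) {u : Fin n} {t : ℕ}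
    (p : (cycleGraph n).Walk u (u + t)) (hp : t + p.length < n) :
    ∃ b : ℕ, p.length = t + 2 * b ∧ (b = 0 → p.edges = arcEdges u t) := by
  obtain ⟨a, b, hlen, hend, hedges⟩ := exists_steps_of_walk hn p
  have hab : a = t + b := eq_of_add_natCast_eq (u := u) (a := a) (b := t + b) (by omega)
    (by omega) (by push_cast; rw [hend, add_assoc])
  refine ⟨b, by omega, fun hb => ?_⟩
  rw [hedges hb, hab, hb, add_zero]

lemma le_length_of_walk (hn : 2 ≤ n) {u : Fin n} {t : ℕ} (ht : 2 * t ≤ n)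
    (p : (cycleGraph n).Walk u (u + t)) : t ≤ p.length := by
  by_contra! hp
  obtain ⟨b, hlen, -⟩ := exists_length_eq_of_walk_add hn p (by omega)
  omega

lemma edges_eq_arcEdges_of_length_le (hn : 2 ≤ n) {u : Fin n} {t : ℕ} (ht : 2 * t < n)
    (p : (cycleGraph n).Walk u (u + t)) (hp : p.length ≤ t) : p.edges = arcEdges u t := by
  obtain ⟨b, hlen, hedges⟩ := exists_length_eq_of_walk_add hn p (by omega)
  exact hedges (by omega)

lemma not_forall_injective_window {t : ℕ} (hn : n = 2 * t + 1) (ht : 2 ≤ t)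
    (f : Fin n → Fin t) :
    ¬ ∀ u : Fin n, Injective fun i : Fin t => f (u + (i : ℕ)) := by
  intro hinj
  have period : ∀ u, f (u + t) = f u := by
    intro u
    obtain ⟨j, hj⟩ := Finite.injective_iff_surjective.1 (hinj (u + 1)) (f u)
    have hj' : f (u + ((j + 1 : ℕ) : Fin n)) = f u := by
      push_cast at hj ⊢; rwa [add_comm _ 1, ← add_assoc]
    have hlast : (j : ℕ) + 1 = t := by
      by_contra hne
      have := hinj u (a₁ := ⟨j + 1, by omega⟩) (a₂ := ⟨0, by omega⟩)
        (by simpa using hj')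
      simp [Fin.ext_iff] at this
    rw [← hj', hlast]
  -- `2 t = -1` in `Fin n`, so two shifts by `t` are one step back.
  have back : ∀ u, f (u + 1) = f u := by
    intro u
    have h2t : u + 1 + t + t = u := by
      rw [add_assoc, add_assoc, ← add_assoc (1 : Fin n)]
      have : (1 : Fin n) + t + t = ((2 * t + 1 : ℕ) : Fin n) := by push_cast; ring
      rw [this, ← hn, Fin.natCast_self, add_zero]
    rw [← period (u + 1), ← period (u + 1 + t), h2t]
  have := hinj 0 (a₁ := ⟨1, by omega⟩) (a₂ := ⟨0, by omega⟩) (by simpa using back 0)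
  simp [Fin.ext_iff] at this

/-- The edge `{i, i + 1}` gets the colour `i mod k`; pairs that are not edges get colour `0`. -/
noncomputable def modColoring (k : ℕ) [NeZero k] : Sym2 (Fin n) → Fin k :=
  extend edge (fun i => (i.val : Fin k)) 0

lemma modColoring_edge (hn : 3 ≤ n) (k : ℕ) [NeZero k] (i : Fin n) :
    modColoring k (edge i) = (i.val : Fin k) :=
  (edge_injective hn).extend_apply _ _ _

lemma nodup_map_modColoring_arcEdges (hn : 3 ≤ n) {k : ℕ} [NeZero k] (hk : n ≤ 2 * k)
    (u : Fin n) {L : ℕ} (hL : L ≤ n - k) : ((arcEdges u L).map (modColoring k)).Nodup := by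
  rw [arcEdges, List.map_ofFn, List.nodup_ofFn]
  suffices ∀ i j : Fin L, i < j → (u + (i : ℕ)).val % k ≠ (u + (j : ℕ)).val % k by
    intro i j hij
    simp only [comp_apply, modColoring_edge hn, Fin.ext_iff, Fin.val_natCast] at hij
    rcases lt_trichotomy i j with h | h | h
    exacts [absurd hij (this i j h), h, absurd hij.symm (this j i h)]
  intro i j hij
  have hj : u + (j : ℕ) = u + (i : ℕ) + ((j - i : ℕ) : Fin n) := by
    rw [add_assoc, ← Nat.cast_add, Nat.add_sub_cancel' (Fin.le_of_lt hij)]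
  rw [hj]
  generalize u + (i : ℕ) = w
  rw [Fin.val_add, Fin.val_natCast, Nat.add_mod_mod]
  exact mod_ne_add_mod_mod (δ := j - i) hk (Fin.is_lt _) (by omega) (by omega)

theorem rainbowConnected (hn : 3 ≤ n) : (cycleGraph n).RainbowConnected ((n + 1) / 2) := by
  have : NeZero ((n + 1) / 2) := ⟨by omega⟩
  let c : Sym2 (Fin n) → Fin ((n + 1) / 2) := modColoring ((n + 1) / 2)
  have short_arc : ∀ (w : Fin n) (L : ℕ), L ≤ n / 2 →
      ∃ p : (cycleGraph n).Walk w (w + L), p.IsPath ∧ (p.edges.map c).Nodup :=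
    fun w L hL => ⟨arc (by omega) L w, isPath_arc _ (by omega) w, by
      rw [edges_arc]; exact nodup_map_modColoring_arcEdges hn (by omega) w (by omega)⟩
  refine ⟨c, fun u v huv => ?_⟩
  have hsum : (u - v).val = n - (v - u).val := by
    rw [← neg_sub, Fin.val_neg, if_neg (sub_ne_zero.2 huv.symm)]
  rcases le_or_gt (v - u).val (n / 2) with hd | hd
  · obtain ⟨p, hpath, hrainbow⟩ := short_arc u _ hd
    exact ⟨p.copy rfl (by simp), by simpa using hpath, by simpa using hrainbow⟩
  · obtain ⟨p, hpath, hrainbow⟩ := short_arc v (u - v).val (by omega)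
    refine ⟨(p.copy rfl (by simp)).reverse, by simpa using hpath.reverse, ?_⟩
    simpa [List.map_reverse] using hrainbow

theorem le_of_rainbowConnected (hn : 4 ≤ n) {m : ℕ} (h : (cycleGraph n).RainbowConnected m) :
    (n + 1) / 2 ≤ m := by
  obtain ⟨c, hc⟩ := h
  have rainbow_path : ∀ (u : Fin n) (t : ℕ), 0 < t → t < n →
      ∃ p : (cycleGraph n).Walk u (u + t), p.length ≤ m ∧ (p.edges.map c).Nodup := by
    intro u t ht htn
    have hne : u ≠ u + t := fun h =>
      absurd (eq_of_add_natCast_eq (u := u) (a := 0) (b := t) (by omega) htn (by simpa using h))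
        ht.ne
    obtain ⟨p, -, hp⟩ := hc u _ hne
    exact ⟨p, by simpa using hp.length_le_card, hp⟩
  obtain ⟨p, hpm, -⟩ := rainbow_path 0 (n / 2) (by omega) (by omega)
  have hhalf : n / 2 ≤ m := (le_length_of_walk (by omega) (by omega) p).trans hpm
  obtain ⟨s, hs | hs⟩ := Nat.even_or_odd' n
  · omega
  by_contra! hlt
  obtain rfl : m = s := by omega
  -- With only `m` colours, the rainbow path from `u` to `u + m` is the forward arc.
  refine not_forall_injective_window hs (by omega) (c ∘ edge) fun u => ?_
  obtain ⟨p, hpm, hp⟩ := rainbow_path u m (by omega) (by omega)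
  rwa [edges_eq_arcEdges_of_length_le (by omega) (by omega) p hpm, arcEdges, List.map_ofFn,
    List.nodup_ofFn] at hp

end SimpleGraph.cycleGraph

/-- For `n ≥ 4`, the rainbow connection number of the cycle `Cₙ` is `⌈n/2⌉`. -/
theorem rc_cycleGraph (n : ℕ) (hn : 4 ≤ n) :
    (cycleGraph n).rc = (n + 1) / 2 := by
  have : NeZero n := ⟨by omega⟩
  have hrc := cycleGraph.rainbowConnected (n := n) (by omega)
  exact le_antisymm (Nat.sInf_le hrc)
    (le_csInf ⟨_, hrc⟩ fun _ => cycleGraph.le_of_rainbowConnected hn)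
end

section
/- For integers s and t with 2 ≤ s ≤ t, the rainbow connection number of the complete bipartite graph K_{s,t} equals min{⌈t^{1/s}⌉, 4}, where ⌈t^{1/s}⌉ denotes the least integer m with m^s ≥ t. -/
open SimpleGraph

/-!
With at most three colours, a rainbow path between two vertices on the side of size `t` has
length two. Hence the colour vectors `(c(ab))_a ∈ [k]^s` of the vertices `b` on that side are
pairwise distinct, and `t ≤ k ^ s`. Conversely, if the vertices `b` are given `t` distinct colour
vectors in `[k]^s` that include the `s` unit vectors, every two vertices are joined by a rainbow
path of length at most two. Four colours always suffice, with rainbow paths of length at most four.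
-/

open Function

theorem exists_injective_swap_injective {α β κ : Type*} [Fintype α] [Fintype β] [Fintype κ]
    [Nontrivial κ] (hαβ : Fintype.card α ≤ Fintype.card β)
    (hβκ : Fintype.card β ≤ Fintype.card κ ^ Fintype.card α) :
    ∃ f : α → β → κ, Injective f ∧ Injective (swap f) := by
  classical
  obtain ⟨x, y, hxy⟩ := exists_pair_ne κ
  -- The columns `g b` run through `|β|` distinct vectors including the indicator vectors `e a`,
  -- and the latter already tell the rows apart.
  let e : α → α → κ := fun a a' => if a = a' then x else y
  have he : Injective e := fun a a' h => by simpa [e, hxy.symm] using congrFun h a'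
  obtain ⟨T, heT, -, hT⟩ := Finset.exists_subsuperset_card_eq
    (Finset.subset_univ (Finset.univ.image e)) (by simpa [Finset.card_image_of_injective _ he])
    (by simpa [Fintype.card_fun] using hβκ)
  let g : β ≃ T := Fintype.equivOfCardEq (by simp [hT])
  refine ⟨fun a b => (g b : α → κ) a, fun a a' h => ?_, fun b b' h => g.injective (Subtype.ext h)⟩
  have hea : e a ∈ T := heT (Finset.mem_image_of_mem e (Finset.mem_univ a))
  simpa [e, hxy] using congrFun h (g.symm ⟨e a, hea⟩)

namespace SimpleGraph

variable {V α β κ : Type*}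

theorem rainbowConnected_of_forall_exists_walk {G : SimpleGraph V} {n : ℕ} (c : Sym2 V → Fin n)
    (hc : ∀ u v, u ≠ v → ∃ p : G.Walk u v, (p.edges.map c).Nodup) : G.RainbowConnected n :=
  ⟨c, fun u v huv => by
    classical
    obtain ⟨p, hp⟩ := hc u v huv
    exact ⟨p.bypass, p.bypass_isPath, hp.sublist (p.edges_bypass_sublist_edges.map c)⟩⟩

def bipartiteEdgeColoring (f : α → β → κ) (d : κ) : Sym2 (α ⊕ β) → κ :=
  Sym2.lift ⟨fun x y => match x, y with
    | .inl a, .inr b | .inr b, .inl a => f a b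
    | _, _ => d, by rintro (a | b) (a' | b') <;> rfl⟩

section bipartiteEdgeColoring

variable (f : α → β → κ) (d : κ) (a : α) (b : β)

@[simp]
theorem bipartiteEdgeColoring_inl_inr : bipartiteEdgeColoring f d s(.inl a, .inr b) = f a b :=
  rfl

@[simp]
theorem bipartiteEdgeColoring_inr_inl : bipartiteEdgeColoring f d s(.inr b, .inl a) = f a b :=
  rfl

end bipartiteEdgeColoring

namespace completeBipartiteGraph

theorem adj_inl_inr (a : α) (b : β) : (completeBipartiteGraph α β).Adj (.inl a) (.inr b) := by
  simp

theorem adj_inr_inl (a : α) (b : β) : (completeBipartiteGraph α β).Adj (.inr b) (.inl a) := by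
  simp

theorem exists_edges_eq_of_length_le_three {u v : β} (huv : u ≠ v)
    (p : (completeBipartiteGraph α β).Walk (.inr u) (.inr v)) (hp : p.length ≤ 3) :
    ∃ a, p.edges = [s(.inr u, .inl a), s(.inl a, .inr v)] := by
  cases p with
  | nil => exact absurd rfl huv
  | @cons _ x _ h₁ q =>
    obtain a | _ := x
    · cases q with
      | @cons _ y _ h₂ r =>
        obtain _ | _ := y
        · simp at h₂
        · cases r with
          | nil => exact ⟨a, rfl⟩
          | @cons _ z _ h₃ r =>
            obtain _ | _ := z
            · cases r with
              | cons => simp at hp; omega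
            · simp at h₃
    · simp at h₁

theorem card_le_pow_of_rainbowConnected [Fintype α] [Fintype β] {k : ℕ} (hk : k ≤ 3)
    (h : (completeBipartiteGraph α β).RainbowConnected k) :
    Fintype.card β ≤ k ^ Fintype.card α := by
  classical
  obtain ⟨c, hc⟩ := h
  have hinj : Injective fun (b : β) (a : α) => c s(.inl a, .inr b) := by
    intro u v huv
    by_contra hne
    obtain ⟨p, -, hp⟩ := hc (.inr u) (.inr v) (by simpa using hne)
    have hlen : p.length ≤ 3 := by
      simpa using hp.length_le_card.trans (Fintype.card_fin k).le |>.trans hk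
    obtain ⟨a, ha⟩ := exists_edges_eq_of_length_le_three hne p hlen
    simp [ha, Sym2.eq_swap, congrFun huv a] at hp
  simpa [Fintype.card_fun] using Fintype.card_le_of_injective _ hinj

theorem rainbowConnected_of_injective {k : ℕ} (f : α → β → Fin k) (d : Fin k)
    (hf : Injective f) (hf' : Injective (swap f)) :
    (completeBipartiteGraph α β).RainbowConnected k := by
  refine rainbowConnected_of_forall_exists_walk (bipartiteEdgeColoring f d) ?_
  rintro (a | b) (a' | b') hne
  · obtain ⟨b, hb⟩ := Function.ne_iff.mp (hf.ne (by simpa using hne))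
    exact ⟨.cons (adj_inl_inr a b) (.cons (adj_inr_inl a' b) .nil), by simpa using hb⟩
  · exact ⟨(adj_inl_inr a b').toWalk, by simp⟩
  · exact ⟨(adj_inr_inl a' b).toWalk, by simp⟩
  · obtain ⟨a, ha⟩ := Function.ne_iff.mp (hf'.ne (by simpa using hne))
    exact ⟨.cons (adj_inr_inl a b) (.cons (adj_inl_inr a b') .nil), by simpa using ha⟩

theorem rainbowConnected_of_card_le_pow [Fintype α] [Fintype β] {k : ℕ} (hk : 2 ≤ k)
    (hαβ : Fintype.card α ≤ Fintype.card β) (hβ : Fintype.card β ≤ k ^ Fintype.card α) :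
    (completeBipartiteGraph α β).RainbowConnected k := by
  have : Nontrivial (Fin k) := Fin.nontrivial_iff_two_le.mpr hk
  obtain ⟨f, hf, hf'⟩ := exists_injective_swap_injective (κ := Fin k) hαβ (by simpa using hβ)
  exact rainbowConnected_of_injective f ⟨0, by omega⟩ hf hf'

theorem rainbowConnected_four [Nontrivial α] [Nontrivial β] :
    (completeBipartiteGraph α β).RainbowConnected 4 := by
  classical
  obtain ⟨a₀, a₁, ha⟩ := exists_pair_ne α
  obtain ⟨b₀, b₁, hb⟩ := exists_pair_ne β
  -- Two vertices on the same side are joined through `b₀` or `a₀` when one of them is `a₀` or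
  -- `b₀`, and otherwise by the path through `a₀` and `b₀`, which uses all four colours.
  let f : α → β → Fin 4 := fun a b =>
    if b = b₀ then (if a = a₀ then 0 else 1) else (if a = a₀ then 2 else 3)
  refine rainbowConnected_of_forall_exists_walk (bipartiteEdgeColoring f 0) ?_
  rintro (a | b) (a' | b') hne
  · replace hne : a ≠ a' := by simpa using hne
    by_cases h : a = a₀ ∨ a' = a₀
    · refine ⟨.cons (adj_inl_inr a b₀) (.cons (adj_inr_inl a' b₀) .nil), ?_⟩
      rcases h with rfl | rfl <;> simp [f, hne, hne.symm]
    · rw [not_or] at h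
      refine ⟨.cons (adj_inl_inr a b₀) (.cons (adj_inr_inl a₀ b₀)
        (.cons (adj_inl_inr a₀ b₁) (.cons (adj_inr_inl a' b₁) .nil))), ?_⟩
      simp [f, h.1, h.2, hb.symm]
  · exact ⟨(adj_inl_inr a b').toWalk, by simp⟩
  · exact ⟨(adj_inr_inl a' b).toWalk, by simp⟩
  · replace hne : b ≠ b' := by simpa using hne
    by_cases h : b = b₀ ∨ b' = b₀
    · refine ⟨.cons (adj_inr_inl a₀ b) (.cons (adj_inl_inr a₀ b') .nil), ?_⟩
      rcases h with rfl | rfl <;> simp [f, hne, hne.symm]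
    · rw [not_or] at h
      refine ⟨.cons (adj_inr_inl a₀ b) (.cons (adj_inl_inr a₀ b₀)
        (.cons (adj_inr_inl a₁ b₀) (.cons (adj_inl_inr a₁ b') .nil))), ?_⟩
      simp [f, h.1, h.2, ha.symm]

end completeBipartiteGraph

end SimpleGraph

/-- For `2 ≤ s ≤ t`, the rainbow connection number of the complete bipartite graph
`K_{s,t}` equals `min ⌈t^(1/s)⌉ 4`, where `⌈t^(1/s)⌉` is the least integer `m` with
`m ^ s ≥ t`. -/
theorem rc_completeBipartiteGraph (s t : ℕ) (hs : 2 ≤ s) (hst : s ≤ t) :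
    (completeBipartiteGraph (Fin s) (Fin t)).rc = min (sInf {m : ℕ | t ≤ m ^ s}) 4 := by
  set m := sInf {m : ℕ | t ≤ m ^ s}
  have htm : t ≤ m ^ s :=
    Nat.sInf_mem (s := {m : ℕ | t ≤ m ^ s}) ⟨t, Nat.le_self_pow (by omega) t⟩
  have hm : 2 ≤ m := by
    by_contra! h
    have : m ^ s ≤ 1 := Nat.pow_le_one_iff (by omega) |>.mpr (by omega)
    omega
  have : Nontrivial (Fin s) := Fin.nontrivial_iff_two_le.mpr hs
  have : Nontrivial (Fin t) := Fin.nontrivial_iff_two_le.mpr (hs.trans hst)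
  refine IsLeast.csInf_eq ⟨?_, fun n hn => ?_⟩
  · rcases le_total m 4 with h | h
    · rw [min_eq_left h]
      exact completeBipartiteGraph.rainbowConnected_of_card_le_pow hm (by simpa) (by simpa)
    · rw [min_eq_right h]
      exact completeBipartiteGraph.rainbowConnected_four
  · rcases lt_or_ge n 4 with h | h
    · have htn : t ≤ n ^ s := by
        simpa using completeBipartiteGraph.card_le_pow_of_rainbowConnected (by omega) hn
      exact (min_le_left _ _).trans (Nat.sInf_le htn)
    · exact (min_le_right _ _).trans h
end

section
/- Let G be a connected graph and let D be a connected two-way dominating set of G. Then rc(G) ≤ rc(G[D]) + 3, where G[D] is the subgraph of G induced by D. -/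
open SimpleGraph

/-!
Colour `G[D]` rainbow with `k = rc(G[D])` colours and add three new ones: two leg colours for the
edges between `V \ D` and `D`, and one colour for the edges outside `D`. Each `x ∉ D` gets a base
colour `f x` on the edge to a fixed dominator and the other leg colour on its remaining edges to
`D`, so a vertex with two neighbours in `D` has legs of both colours. A vertex `x ∉ D` with only
one neighbour in `D` is not pendant, hence has a neighbour outside `D`; taking `f` to be a maximum
cut of the graph on these vertices, that neighbour can be chosen to have legs of both colours or a
base colour different from `f x`. Any two vertices are then joined by a rainbow walk
`u - d ⋯ d' - v` or `u - w - d ⋯ d' - v` whose middle part is a rainbow walk of `G[D]`.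
-/

namespace SimpleGraph

variable {V : Type*} {G : SimpleGraph V}

lemma RainbowConnected.of_walks {α : Type*} [Fintype α] (c : Sym2 V → α)
    (h : ∀ u v : V, u ≠ v → ∃ p : G.Walk u v, (p.edges.map c).Nodup) :
    G.RainbowConnected (Fintype.card α) := by
  classical
  refine ⟨Fintype.equivFin α ∘ c, fun u v huv => ?_⟩
  obtain ⟨p, hp⟩ := h u v huv
  refine ⟨p.bypass, p.bypass_isPath, ?_⟩
  rw [← List.map_map]
  exact (hp.sublist (p.edges_bypass_sublist_edges.map c)).map (Fintype.equivFin α).injective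

lemma RainbowConnected.exists_walk {n : ℕ} (h : G.RainbowConnected n) :
    ∃ c : Sym2 V → Fin n, ∀ u v : V, ∃ p : G.Walk u v, (p.edges.map c).Nodup := by
  obtain ⟨c, hc⟩ := h
  refine ⟨c, fun u v => ?_⟩
  obtain rfl | huv := eq_or_ne u v
  · exact ⟨.nil, by simp⟩
  · obtain ⟨p, -, hp⟩ := hc u v huv
    exact ⟨p, hp⟩

lemma RainbowConnected.rc_le {n : ℕ} (h : G.RainbowConnected n) : G.rc ≤ n :=
  Nat.sInf_le h

lemma Connected.rainbowConnected_rc [Finite V] (h : G.Connected) :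
    G.RainbowConnected G.rc := by
  classical
  have := Fintype.ofFinite V
  refine Nat.sInf_mem (s := {n | G.RainbowConnected n})
    ⟨_, RainbowConnected.of_walks id fun u v _ => ?_⟩
  obtain ⟨p⟩ := h.preconnected u v
  exact ⟨p.bypass, by simpa using p.bypass_isPath.edges_nodup⟩

section Extension

variable (D : Set V) {k : ℕ} (c₀ : Sym2 D → Fin k) (leg : V → V → Bool)

open Classical in
noncomputable def extendColouring : Sym2 V → Fin k ⊕ Option Bool :=
  Sym2.lift ⟨fun a b =>
    if ha : a ∈ D then
      if hb : b ∈ D then .inl (c₀ s(⟨a, ha⟩, ⟨b, hb⟩)) else .inr (some (leg b a))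
    else if b ∈ D then .inr (some (leg a b)) else .inr none,
    fun a b => by by_cases ha : a ∈ D <;> by_cases hb : b ∈ D <;> simp [ha, hb, Sym2.eq_swap]⟩

@[simp]
lemma extendColouring_map_val (e : Sym2 D) :
    extendColouring D c₀ leg (e.map (↑)) = .inl (c₀ e) := by
  induction e using Sym2.ind with
  | _ a b => simp [extendColouring]

variable {D}

@[simp]
lemma extendColouring_leg {x d : V} (hx : x ∉ D) (hd : d ∈ D) :
    extendColouring D c₀ leg s(x, d) = .inr (some (leg x d)) := by
  simp [extendColouring, hx, hd]

@[simp]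
lemma extendColouring_leg' {x d : V} (hx : x ∉ D) (hd : d ∈ D) :
    extendColouring D c₀ leg s(d, x) = .inr (some (leg x d)) := by
  simp [extendColouring, hx, hd]

@[simp]
lemma extendColouring_outside {x y : V} (hx : x ∉ D) (hy : y ∉ D) :
    extendColouring D c₀ leg s(x, y) = .inr none := by
  simp [extendColouring, hx, hy]

lemma exists_rainbow_walk_through
    (hc₀ : ∀ a b : D, ∃ q : (G.induce D).Walk a b, (q.edges.map c₀).Nodup)
    {u d d' v : V} (hd : d ∈ D) (hd' : d' ∈ D) (pre : G.Walk u d) (suf : G.Walk d' v)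
    (hnew : ∀ e ∈ pre.edges ++ suf.edges, (extendColouring D c₀ leg e).isRight)
    (hnd : ((pre.edges ++ suf.edges).map (extendColouring D c₀ leg)).Nodup) :
    ∃ p : G.Walk u v, (p.edges.map (extendColouring D c₀ leg)).Nodup := by
  obtain ⟨q, hq⟩ := hc₀ ⟨d, hd⟩ ⟨d', hd'⟩
  obtain ⟨r, hr⟩ : ∃ r : G.Walk d d',
      r.edges.map (extendColouring D c₀ leg) = (q.edges.map c₀).map .inl := by
    refine ⟨q.map (Embedding.induce D).toHom, ?_⟩
    refine (congrArg _ (Walk.edges_map _ q)).trans ?_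
    rw [List.map_map, List.map_map]
    exact List.map_congr_left fun e _ => extendColouring_map_val D c₀ leg e
  refine ⟨pre.append (r.append suf), ?_⟩
  rw [Walk.edges_append, Walk.edges_append, List.map_append, List.map_append,
    (List.perm_append_comm_assoc _ _ _).nodup_iff, hr, ← List.map_append, List.nodup_append]
  refine ⟨hq.map Sum.inl_injective, hnd, ?_⟩
  simp only [List.mem_map, List.mem_append]
  rintro _ ⟨i, -, rfl⟩ _ ⟨e, he, rfl⟩ h
  simpa [← h] using hnew e (List.mem_append.2 he)

def HasLeg (G : SimpleGraph V) (D : Set V) (leg : V → V → Bool) (x : V) (b : Bool) : Prop :=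
  ∃ d ∈ D, G.Adj x d ∧ leg x d = b

theorem RainbowConnected.add_three (hD : (G.induce D).RainbowConnected k)
    (hleg : ∀ x ∉ D, ∃ b, HasLeg G D leg x b)
    (hpair : ∀ u ∉ D, ∀ v ∉ D, (∃ b, HasLeg G D leg u b ∧ HasLeg G D leg v !b) ∨
      ∃ w ∉ D, G.Adj u w ∧ ∃ b, HasLeg G D leg w b ∧ HasLeg G D leg v !b) :
    G.RainbowConnected (k + 3) := by
  obtain ⟨c₀, hc₀⟩ := hD.exists_walk
  have h := RainbowConnected.of_walks (G := G) (extendColouring D c₀ leg) fun u v _ => ?_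
  · simpa using h
  by_cases hu : u ∈ D <;> by_cases hv : v ∈ D
  · exact exists_rainbow_walk_through c₀ leg hc₀ hu hv .nil .nil (by simp) (by simp)
  · obtain ⟨_, d', hd', hvd', rfl⟩ := hleg v hv
    exact exists_rainbow_walk_through c₀ leg hc₀ hu hd' .nil (.cons hvd'.symm .nil)
      (by simp [hv, hd']) (by simp)
  · obtain ⟨_, d, hd, hud, rfl⟩ := hleg u hu
    exact exists_rainbow_walk_through c₀ leg hc₀ hd hv (.cons hud .nil) .nil
      (by simp [hu, hd]) (by simp)
  · rcases hpair u hu v hv with ⟨_, ⟨d, hd, hud, rfl⟩, d', hd', hvd', hb⟩ |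
      ⟨w, hw, huw, _, ⟨d, hd, hwd, rfl⟩, d', hd', hvd', hb⟩
    · exact exists_rainbow_walk_through c₀ leg hc₀ hd hd' (.cons hud .nil)
        (.cons hvd'.symm .nil) (by simp [hu, hv, hd, hd']) (by simp [hu, hv, hd, hd', hb])
    · exact exists_rainbow_walk_through c₀ leg hc₀ hd hd' (.cons huw (.cons hwd .nil))
        (.cons hvd'.symm .nil) (by simp [hu, hv, hw, hd, hd'])
        (by simp [hu, hv, hw, hd, hd', hb])

end Extension

section Legs

open Finset in
lemma exists_bool_exists_adj_ne_of_adj {W : Type*} [Finite W] (H : SimpleGraph W) :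
    ∃ f : W → Bool, ∀ x y, H.Adj x y → ∃ z, H.Adj x z ∧ f z ≠ f x := by
  classical
  have := Fintype.ofFinite W
  let cut (f : W → Bool) : ℕ := #{p : W × W | H.Adj p.1 p.2 ∧ f p.1 ≠ f p.2}
  obtain ⟨f, hf⟩ := Finite.exists_max cut
  refine ⟨f, fun x y hxy => ?_⟩
  by_contra! hsame
  -- flipping `f x` keeps every cut edge and adds the edge `xy`
  let g := Function.update f x (!f x)
  have hgx : g x ≠ f x := by simp [g]
  have hgy : g y = f x := by simp [g, hxy.ne.symm, hsame y hxy]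
  have hsub : ({p : W × W | H.Adj p.1 p.2 ∧ f p.1 ≠ f p.2} : Finset _) ⊆
      ({p : W × W | H.Adj p.1 p.2 ∧ g p.1 ≠ g p.2} : Finset _) := by
    intro p hp
    simp only [Finset.mem_filter, Finset.mem_univ, true_and] at hp ⊢
    have h₁ : p.1 ≠ x := fun h => hp.2 (h ▸ hsame p.2 (h ▸ hp.1)).symm
    have h₂ : p.2 ≠ x := fun h => hp.2 (h ▸ hsame p.1 (h ▸ hp.1.symm))
    simpa [g, h₁, h₂] using hp
  have hlt : cut f < cut g := by
    refine Finset.card_lt_card ((Finset.ssubset_iff_of_subset hsub).2 ⟨(x, y), ?_, ?_⟩) <;>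
      simp [hxy, hsame y hxy, hgy, hgx]
  exact (hf g).not_gt hlt

lemma exists_bool_exists_adj_ne_of_adj_of_mem [Finite V] (S : Set V) :
    ∃ f : V → Bool, ∀ x ∈ S, ∀ y ∈ S, G.Adj x y → ∃ z ∈ S, G.Adj x z ∧ f z ≠ f x := by
  classical
  obtain ⟨f, hf⟩ := exists_bool_exists_adj_ne_of_adj (G.induce S)
  refine ⟨fun x => if h : x ∈ S then f ⟨x, h⟩ else false, fun x hx y hy hxy => ?_⟩
  obtain ⟨z, hxz, hz⟩ := hf ⟨x, hx⟩ ⟨y, hy⟩ hxy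
  exact ⟨z, z.2, hxz, by simpa [z.2, hx] using hz⟩

variable {D : Set V}

lemma exists_adj_notMem_of_unique_adj_mem
    (hpendant : ∀ v : V, (G.neighborSet v).ncard = 1 → v ∈ D) {x d : V} (hx : x ∉ D)
    (hxd : G.Adj x d) (huniq : ∀ d' ∈ D, G.Adj x d' → d' = d) : ∃ w ∉ D, G.Adj x w := by
  by_contra! h
  refine hx (hpendant x ?_)
  have : G.neighborSet x = {d} := Set.eq_singleton_iff_unique_mem.2
    ⟨hxd, fun w hw => huniq w (not_not.1 fun hwD => h w hwD hw) hw⟩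
  rw [this, Set.ncard_singleton]

theorem exists_leg_colouring [Finite V] (hdom : ∀ v ∉ D, ∃ u ∈ D, G.Adj u v)
    (hpendant : ∀ v : V, (G.neighborSet v).ncard = 1 → v ∈ D) :
    ∃ leg : V → V → Bool, (∀ x ∉ D, ∃ b, HasLeg G D leg x b) ∧
      ∀ u ∉ D, ∀ v ∉ D, (∃ b, HasLeg G D leg u b ∧ HasLeg G D leg v !b) ∨
        ∃ w ∉ D, G.Adj u w ∧ ∃ b, HasLeg G D leg w b ∧ HasLeg G D leg v !b := by
  classical
  choose! dom hdomD hdomAdj using hdom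
  let S : Set V := {x | x ∉ D ∧ ∀ d ∈ D, G.Adj x d → d = dom x}
  obtain ⟨f, hf⟩ := exists_bool_exists_adj_ne_of_adj_of_mem (G := G) S
  let leg (x d : V) : Bool := if d = dom x then f x else !f x
  have hbase : ∀ x ∉ D, HasLeg G D leg x (f x) := fun x hx =>
    ⟨dom x, hdomD x hx, (hdomAdj x hx).symm, if_pos rfl⟩
  have hall : ∀ x ∉ D, x ∉ S → ∀ b, HasLeg G D leg x b := by
    intro x hx hxS b
    obtain ⟨d, hd, hxd, hne⟩ : ∃ d ∈ D, G.Adj x d ∧ d ≠ dom x := by simpa [S, hx] using hxS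
    obtain rfl | rfl : b = f x ∨ b = !f x := by cases b <;> cases f x <;> simp
    · exact hbase x hx
    · exact ⟨d, hd, hxd, if_neg hne⟩
  have hflip : ∀ x, ∀ y ∉ D, f y ≠ f x → HasLeg G D leg y !f x := fun x y hy h =>
    Bool.eq_not_iff.2 h ▸ hbase y hy
  have hnext : ∀ x ∈ S, ∃ w ∉ D, G.Adj x w ∧ (w ∉ S ∨ f w ≠ f x) := by
    intro x hxS
    obtain ⟨w, hw, hxw⟩ :=
      exists_adj_notMem_of_unique_adj_mem hpendant hxS.1 (hdomAdj x hxS.1).symm hxS.2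
    by_cases hwS : w ∈ S
    · obtain ⟨z, hzS, hxz, hz⟩ := hf x hxS w hwS hxw
      exact ⟨z, hzS.1, hxz, .inr hz⟩
    · exact ⟨w, hw, hxw, .inl hwS⟩
  refine ⟨leg, fun x hx => ⟨_, hbase x hx⟩, fun u hu v hv => ?_⟩
  by_cases huS : u ∈ S
  · by_cases hvS : v ∈ S
    · by_cases hfuv : f u = f v
      · obtain ⟨w, hw, huw, hwS | hfw⟩ := hnext u huS
        · exact .inr ⟨w, hw, huw, !f v, hall w hw hwS _, by simpa using hbase v hv⟩
        · exact .inr ⟨w, hw, huw, f w, hbase w hw, hflip w v hv (hfuv ▸ hfw).symm⟩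
      · exact .inl ⟨f u, hbase u hu, hflip u v hv (Ne.symm hfuv)⟩
    · exact .inl ⟨f u, hbase u hu, hall v hv hvS _⟩
  · exact .inl ⟨!f v, hall u hu huS _, by simpa using hbase v hv⟩

end Legs

end SimpleGraph

theorem rc_le_rc_induce_add_three_general {V : Type*} [Fintype V] (G : SimpleGraph V)
    (D : Set V)
    (hdom : ∀ v ∉ D, ∃ u ∈ D, G.Adj u v)
    (hpendant : ∀ v : V, (G.neighborSet v).ncard = 1 → v ∈ D)
    (hDconn : (G.induce D).Connected) :
    G.rc ≤ (G.induce D).rc + 3 := by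
  obtain ⟨leg, hleg, hpair⟩ := exists_leg_colouring hdom hpendant
  exact (hDconn.rainbowConnected_rc.add_three leg hleg hpair).rc_le

/-- If `D` is a connected two-way dominating set of a connected graph `G`, then
`rc(G) ≤ rc(G[D]) + 3`. -/
theorem rc_le_rc_induce_add_three {V : Type*} [Fintype V] (G : SimpleGraph V)
    (hconn : G.Connected) (D : Set V)
    (hdom : ∀ v ∉ D, ∃ u ∈ D, G.Adj u v)
    (hpendant : ∀ v : V, (G.neighborSet v).ncard = 1 → v ∈ D)
    (hDconn : (G.induce D).Connected) :
    G.rc ≤ (G.induce D).rc + 3 :=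
  rc_le_rc_induce_add_three_general G D hdom hpendant hDconn
end
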